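/- arXiv:2112.12360 — 5 statements merged into one kernel-verified Lean document; each statement's English description precedes it below -/
import Mathlib

section
/- Conservation of the general state redistribution (SRD) framework: under the stated setup, if for every index i the weights satisfy ∑_{j ∈ W_i} w_{i,j} = 1, then the final update conserves mass, i.e. ∑_i V_i U^{n+1}_i = ∑_i V_i Û_i. -/
open Finset

/-- **Conservation of the general SRD framework.**
Let `ι` be a finite index set of cells, `V` positive volumes, `Uhat` a
provisional state, `w` weights and `M i` the neighborhood of cell `i`
(with `i ∈ M i`).  Let `W i = {j | i ∈ M j}`, let
`Vhat i = ∑ j ∈ M i, w j i * V j` (assumed nonzero), let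
`Qhat i = (∑ j ∈ M i, w j i * V j * Uhat j) / Vhat i` and let the final
update be `Unew i = ∑ j ∈ W i, w i j * Qhat j`.  If all the weight sums
`∑ j ∈ W i, w i j` equal `1`, then total mass is conserved. -/
theorem srd_general_conservation
    {ι : Type*} [Fintype ι] [DecidableEq ι]
    (V Uhat : ι → ℝ) (w : ι → ι → ℝ) (M : ι → Finset ι)
    (hMself : ∀ i, i ∈ M i)
    (hVpos : ∀ i, 0 < V i)
    (W : ι → Finset ι) (hW : ∀ i, W i = univ.filter (fun j => i ∈ M j))
    (Vhat : ι → ℝ) (hVhat : ∀ i, Vhat i = ∑ j ∈ M i, w j i * V j)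
    (hVhat_ne : ∀ i, Vhat i ≠ 0)
    (Qhat : ι → ℝ)
    (hQhat : ∀ i, Qhat i = (∑ j ∈ M i, w j i * V j * Uhat j) / Vhat i)
    (Unew : ι → ℝ)
    (hUnew : ∀ i, Unew i = ∑ j ∈ W i, w i j * Qhat j)
    (hweights : ∀ i, ∑ j ∈ W i, w i j = 1) :
    ∑ i, V i * Unew i = ∑ i, V i * Uhat i := by
  have key : ∀ j, ∑ i ∈ M j, w i j * V i * Qhat j = ∑ k ∈ M j, w k j * V k * Uhat k := by
    intro j
    have h1 : ∑ i ∈ M j, w i j * V i * Qhat j = (∑ i ∈ M j, w i j * V i) * Qhat j := by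
      rw [Finset.sum_mul]
    rw [h1, ← hVhat, hQhat, mul_div_cancel₀ _ (hVhat_ne j)]
  calc ∑ i, V i * Unew i
      = ∑ i, ∑ j, if i ∈ M j then w i j * V i * Qhat j else 0 := by
        refine Finset.sum_congr rfl fun i _ => ?_
        rw [hUnew, hW, Finset.mul_sum, Finset.sum_filter]
        exact Finset.sum_congr rfl fun j _ => by split <;> ring
    _ = ∑ j, ∑ i, if i ∈ M j then w i j * V i * Qhat j else 0 := Finset.sum_comm
    _ = ∑ j, ∑ i ∈ M j, w i j * V i * Qhat j := by
        refine Finset.sum_congr rfl fun j _ => ?_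
        rw [Finset.sum_ite_mem, Finset.univ_inter]
    _ = ∑ j, ∑ k ∈ M j, w k j * V k * Uhat k := Finset.sum_congr rfl fun j _ => key j
    _ = ∑ k, ∑ j, if k ∈ M j then w k j * V k * Uhat k else 0 := by
        rw [Finset.sum_comm]
        refine Finset.sum_congr rfl fun j _ => ?_
        rw [Finset.sum_ite_mem, Finset.univ_inter]
    _ = ∑ k, V k * Uhat k := by
        refine Finset.sum_congr rfl fun k _ => ?_
        have : ∑ j, (if k ∈ M j then w k j * V k * Uhat k else 0)
            = (∑ j ∈ W k, w k j) * (V k * Uhat k) := by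
          rw [hW, Finset.sum_filter, Finset.sum_mul]
          exact Finset.sum_congr rfl fun j _ => by split <;> ring
        rw [this, hweights k, one_mul]
end

section
/- Matrix-form conservation of state redistribution: let A be an n × n real matrix whose columns each sum to 1 (i.e. eᵀA = eᵀ where e is the all-ones vector), let V ∈ ℝⁿ be a vector of volumes such that every entry of V̂ := A V is nonzero, and let Û ∈ ℝⁿ. Define Q̂ = Diag(V̂)⁻¹ A Diag(V) Û and U^{n+1} = Aᵀ Q̂. Then Vᵀ U^{n+1} = Vᵀ Û. -/
open Matrix

/-- **Matrix-form conservation of state redistribution (no slopes).**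
If the columns of `A` each sum to `1` (`eᵀA = eᵀ`), every entry of
`V̂ = A V` is nonzero, `Q̂ = Diag(V̂)⁻¹ A Diag(V) Û` and `Uⁿ⁺¹ = Aᵀ Q̂`,
then `Vᵀ Uⁿ⁺¹ = Vᵀ Û`. -/
theorem srd_matrix_conservation
    {n : ℕ} (A : Matrix (Fin n) (Fin n) ℝ)
    (hA : ∀ j, ∑ i, A i j = 1)
    (V : Fin n → ℝ)
    (Vhat : Fin n → ℝ) (hVhat : Vhat = A *ᵥ V)
    (hVhat_ne : ∀ i, Vhat i ≠ 0)
    (Uhat : Fin n → ℝ)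
    (Qhat : Fin n → ℝ)
    (hQhat : Qhat = ((Matrix.diagonal Vhat)⁻¹ * A * Matrix.diagonal V) *ᵥ Uhat)
    (Unew : Fin n → ℝ) (hUnew : Unew = Aᵀ *ᵥ Qhat) :
    V ⬝ᵥ Unew = V ⬝ᵥ Uhat := by
  have hinv : (Matrix.diagonal Vhat)⁻¹ = Matrix.diagonal (fun i => (Vhat i)⁻¹) := by
    apply Matrix.inv_eq_right_inv
    rw [Matrix.diagonal_mul_diagonal]
    ext i j
    by_cases h : i = j <;>
      simp [h, Matrix.one_apply, Matrix.diagonal, mul_inv_cancel₀ (hVhat_ne j)]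
  subst hUnew hQhat
  rw [Matrix.dotProduct_mulVec, Matrix.vecMul_transpose, ← hVhat, hinv,
      ← Matrix.mulVec_mulVec, ← Matrix.mulVec_mulVec, Matrix.dotProduct_mulVec]
  have h1 : Vhat ᵥ* Matrix.diagonal (fun i => (Vhat i)⁻¹) = fun _ => 1 := by
    funext i
    simp [Matrix.vecMul_diagonal, mul_inv_cancel₀ (hVhat_ne i)]
  rw [h1, Matrix.dotProduct_mulVec]
  have h2 : (fun _ : Fin n => (1:ℝ)) ᵥ* A = fun _ => 1 := by
    funext j
    simp [Matrix.vecMul, dotProduct, hA j]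
  rw [h2, Matrix.dotProduct_mulVec]
  simp [Matrix.vecMul_diagonal, dotProduct, mul_comm]
end

section
/- Conservation of the state redistribution update with linear reconstruction in three dimensions: let A be an n × n real matrix with eᵀA = eᵀ, let V ∈ ℝⁿ with every entry of V̂ := A V nonzero, let Û ∈ ℝⁿ, and let x, y, z, x̂, ŷ, ẑ ∈ ℝⁿ satisfy Diag(V̂) x̂ = A Diag(V) x, Diag(V̂) ŷ = A Diag(V) y, Diag(V̂) ẑ = A Diag(V) z. Set Q̂ = Diag(V̂)⁻¹ A Diag(V) Û and U^{n+1} = AᵀQ̂ + [Diag(x)Aᵀ − AᵀDiag(x̂)]σ_x + [Diag(y)Aᵀ − AᵀDiag(ŷ)]σ_y + [Diag(z)Aᵀ − AᵀDiag(ẑ)]σ_z for arbitrary slope vectors σ_x, σ_y, σ_z ∈ ℝⁿ. Then Vᵀ U^{n+1} = Vᵀ Û. -/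
open Matrix

/-- **Conservation of the SRD update with linear reconstruction in 3D.**
With `eᵀA = eᵀ`, `V̂ = A V` having nonzero entries, weighted centroids
satisfying `Diag(V̂) x̂ = A Diag(V) x` (and similarly in `y`, `z`),
`Q̂ = Diag(V̂)⁻¹ A Diag(V) Û` and
`Uⁿ⁺¹ = AᵀQ̂ + [Diag(x)Aᵀ − AᵀDiag(x̂)]σₓ + [Diag(y)Aᵀ − AᵀDiag(ŷ)]σ_y
      + [Diag(z)Aᵀ − AᵀDiag(ẑ)]σ_z`,
one has `Vᵀ Uⁿ⁺¹ = Vᵀ Û`. -/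
theorem srd_matrix_conservation_with_slopes
    {n : ℕ} (A : Matrix (Fin n) (Fin n) ℝ)
    (hA : ∀ j, ∑ i, A i j = 1)
    (V : Fin n → ℝ)
    (Vhat : Fin n → ℝ) (hVhat : Vhat = A *ᵥ V)
    (hVhat_ne : ∀ i, Vhat i ≠ 0)
    (Uhat : Fin n → ℝ)
    (x y z xhat yhat zhat : Fin n → ℝ)
    (hx : Matrix.diagonal Vhat *ᵥ xhat = A *ᵥ (Matrix.diagonal V *ᵥ x))
    (hy : Matrix.diagonal Vhat *ᵥ yhat = A *ᵥ (Matrix.diagonal V *ᵥ y))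
    (hz : Matrix.diagonal Vhat *ᵥ zhat = A *ᵥ (Matrix.diagonal V *ᵥ z))
    (σx σy σz : Fin n → ℝ)
    (Qhat : Fin n → ℝ)
    (hQhat : Qhat = ((Matrix.diagonal Vhat)⁻¹ * A * Matrix.diagonal V) *ᵥ Uhat)
    (Unew : Fin n → ℝ)
    (hUnew : Unew = Aᵀ *ᵥ Qhat
      + (Matrix.diagonal x * Aᵀ - Aᵀ * Matrix.diagonal xhat) *ᵥ σx
      + (Matrix.diagonal y * Aᵀ - Aᵀ * Matrix.diagonal yhat) *ᵥ σy
      + (Matrix.diagonal z * Aᵀ - Aᵀ * Matrix.diagonal zhat) *ᵥ σz) :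
    V ⬝ᵥ Unew = V ⬝ᵥ Uhat := by
  have hDD : Matrix.diagonal Vhat * (Matrix.diagonal Vhat)⁻¹ = 1 :=
    Matrix.mul_nonsing_inv _ (by
      rw [Matrix.det_diagonal]
      exact isUnit_iff_ne_zero.mpr (Finset.prod_ne_zero_iff.mpr fun i _ => hVhat_ne i))
  have hQ : Matrix.diagonal Vhat *ᵥ Qhat = (A * Matrix.diagonal V) *ᵥ Uhat := by
    rw [hQhat, Matrix.mulVec_mulVec, ← Matrix.mul_assoc, ← Matrix.mul_assoc, hDD, one_mul]
  -- entrywise consequences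
  have hQ' : ∀ i, Vhat i * Qhat i = ∑ j, A i j * (V j * Uhat j) := by
    intro i
    have := congrFun hQ i
    simpa [Matrix.mulVec, dotProduct, Matrix.mul_apply, Matrix.diagonal,
      Finset.sum_mul, mul_assoc] using this
  have hx' : ∀ i, Vhat i * xhat i = ∑ j, A i j * (V j * x j) := by
    intro i
    have := congrFun hx i
    simpa [Matrix.mulVec, dotProduct, Matrix.diagonal] using this
  have hy' : ∀ i, Vhat i * yhat i = ∑ j, A i j * (V j * y j) := by
    intro i
    have := congrFun hy i
    simpa [Matrix.mulVec, dotProduct, Matrix.diagonal] using this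
  have hz' : ∀ i, Vhat i * zhat i = ∑ j, A i j * (V j * z j) := by
    intro i
    have := congrFun hz i
    simpa [Matrix.mulVec, dotProduct, Matrix.diagonal] using this
  have hVh : ∀ i, Vhat i = ∑ j, A i j * V j := by
    intro i
    have := congrFun hVhat i
    simpa [Matrix.mulVec, dotProduct] using this
  -- term 1
  have t1 : V ⬝ᵥ (Aᵀ *ᵥ Qhat) = V ⬝ᵥ Uhat := by
    have : V ⬝ᵥ (Aᵀ *ᵥ Qhat) = ∑ i, Vhat i * Qhat i := by
      simp [dotProduct, Matrix.mulVec, Matrix.transpose_apply, Finset.mul_sum, hVh,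
        Finset.sum_mul]
      rw [Finset.sum_comm]
      exact Finset.sum_congr rfl fun _ _ => Finset.sum_congr rfl fun _ _ => by ring
    rw [this]
    simp only [hQ']
    rw [Finset.sum_comm]
    simp [dotProduct, ← Finset.sum_mul, hA]
  -- slope terms
  have slope : ∀ (w what σ : Fin n → ℝ),
      (∀ i, Vhat i * what i = ∑ j, A i j * (V j * w j)) →
      V ⬝ᵥ ((Matrix.diagonal w * Aᵀ - Aᵀ * Matrix.diagonal what) *ᵥ σ) = 0 := by
    intro w what σ hw
    have e1 : V ⬝ᵥ ((Matrix.diagonal w * Aᵀ) *ᵥ σ)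
        = ∑ i, ∑ j, V i * w i * (A j i * σ j) := by
      simp [dotProduct, Matrix.mulVec, Matrix.mul_apply, Matrix.diagonal,
        Matrix.transpose_apply, Finset.mul_sum]
      exact Finset.sum_congr rfl fun _ _ => Finset.sum_congr rfl fun _ _ => by ring
    have e2 : V ⬝ᵥ ((Aᵀ * Matrix.diagonal what) *ᵥ σ)
        = ∑ j, (Vhat j * what j) * σ j := by
      simp [dotProduct, Matrix.mulVec, Matrix.mul_apply, Matrix.diagonal,
        Matrix.transpose_apply, Finset.mul_sum, hVh, Finset.sum_mul]
      rw [Finset.sum_comm]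
      exact Finset.sum_congr rfl fun _ _ => Finset.sum_congr rfl fun _ _ => by ring
    rw [Matrix.sub_mulVec, dotProduct_sub, e1, e2, sub_eq_zero]
    simp only [hw]
    rw [Finset.sum_comm]
    simp only [Finset.sum_mul]
    exact Finset.sum_congr rfl fun _ _ => Finset.sum_congr rfl fun _ _ => by ring
  subst hUnew
  simp only [dotProduct_add, t1, slope x xhat σx hx', slope y yhat σy hy',
    slope z zhat σz hz', add_zero]
end

section
/- Columns of the weighted SRD matrix sum to one: define the n × n matrix A^wght by A_{ii} = α_i, A_{ij} = β_i / N_j for j ∈ M_i^- and A_{ij} = 0 otherwise, where α_i = 1 − (1/N_i) ∑_{j ∈ W_i^-} β_j. Then every column of A^wght sums to 1, i.e. eᵀ A^wght = eᵀ. -/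
open Finset

theorem Finset.sum_ite_diag_ite_mem {ι R : Type*} [Fintype ι] [DecidableEq ι] [AddCommMonoid R]
    (M : ι → Finset ι) (d c : ι → R) (j : ι) :
    ∑ i, (if i = j then d i else if j ∈ M i then c i else 0)
      = d j + ∑ i ∈ (univ.filter fun i => j ∈ M i).erase j, c i := by
  rw [← add_sum_erase univ _ (mem_univ j), if_pos rfl, ← filter_erase, sum_filter]
  congr 1
  exact sum_congr rfl fun i hi => if_neg (ne_of_mem_erase hi)

/-- **Columns of the weighted SRD matrix sum to one.**
With neighborhoods `M i ∋ i`, dual sets `W j = {i | j ∈ M i}`, overlap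
counts `N j = |W j|`, per-cell weights `β i`, and
`α i = 1 − (1/N i) ∑ j ∈ W i \ {i}, β j`, define the matrix
`A i j = α i` if `i = j`, `A i j = β i / N j` if `j ∈ M i \ {i}`, and
`A i j = 0` otherwise.  Then every column of `A` sums to `1`,
i.e. `eᵀ A = eᵀ`. -/
theorem srd_weighted_matrix_columns_sum_to_one
    {ι : Type*} [Fintype ι] [DecidableEq ι]
    (M : ι → Finset ι) (hMself : ∀ i, i ∈ M i)
    (W : ι → Finset ι) (hW : ∀ j, W j = univ.filter (fun i => j ∈ M i))
    (N : ι → ℕ) (hN : ∀ j, N j = (W j).card)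
    (β : ι → ℝ)
    (α : ι → ℝ)
    (hα : ∀ i, α i = 1 - (1 / (N i : ℝ)) * ∑ j ∈ (W i).erase i, β j)
    (A : Matrix ι ι ℝ)
    (hA : ∀ i j, A i j =
      if i = j then α i
      else if j ∈ M i then β i / (N j : ℝ)
      else 0) :
    ∀ j, ∑ i, A i j = 1 := by
  intro j
  have hN_ne_zero : (N j : ℝ) ≠ 0 := by
    have hj : j ∈ W j := by simp [hW, hMself j]
    exact_mod_cast hN j ▸ card_ne_zero_of_mem hj
  calc ∑ i, A i j = α j + ∑ i ∈ (W j).erase j, β i / N j := by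
        simp only [hA, hW j]
        exact sum_ite_diag_ite_mem M α (fun i => β i / N j) j
    _ = 1 := by
        rw [hα, ← sum_div]
        field_simp
        ring
end

section
/- Conservation of the weighted (αβ) state redistribution algorithm without slopes: under the stated setup, with weighted neighborhood volumes V̂_i = α_i V_i + β_i ∑_{j ∈ M_i^-} V_j/N_j assumed nonzero, weighted neighborhood averages Q̂_i = (1/V̂_i)(α_i V_i Û_i + β_i ∑_{j ∈ M_i^-} (V_j/N_j) Û_j), and final update U^{n+1}_i = α_i Q̂_i + (1/N_i) ∑_{j ∈ W_i^-} β_j Q̂_j, the total mass is conserved: ∑_i V_i U^{n+1}_i = ∑_i V_i Û_i. -/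
open Finset

/-- **Conservation of the weighted (αβ) SRD algorithm without slopes.**
With neighborhoods `M i ∋ i`, dual sets `W i = {j | i ∈ M j}`, overlap
counts `N i = |W i|`, weights `β i` and
`α i = 1 − (1/N i) ∑ j ∈ W i \ {i}, β j`, weighted neighborhood volumes
`V̂ i = α i * V i + β i * ∑ j ∈ M i \ {i}, V j / N j` (assumed nonzero),
weighted neighborhood averages
`Q̂ i = (α i * V i * Û i + β i * ∑ j ∈ M i \ {i}, (V j / N j) * Û j) / V̂ i`,
and final update
`Uⁿ⁺¹ i = α i * Q̂ i + (1/N i) ∑ j ∈ W i \ {i}, β j * Q̂ j`,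
total mass is conserved: `∑ i, V i * Uⁿ⁺¹ i = ∑ i, V i * Û i`. -/
theorem srd_weighted_conservation
    {ι : Type*} [Fintype ι] [DecidableEq ι]
    (V Uhat : ι → ℝ)
    (M : ι → Finset ι) (hMself : ∀ i, i ∈ M i)
    (W : ι → Finset ι) (hW : ∀ i, W i = univ.filter (fun j => i ∈ M j))
    (N : ι → ℕ) (hN : ∀ i, N i = (W i).card)
    (β : ι → ℝ)
    (α : ι → ℝ)
    (hα : ∀ i, α i = 1 - (1 / (N i : ℝ)) * ∑ j ∈ (W i).erase i, β j)
    (Vhat : ι → ℝ)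
    (hVhat : ∀ i, Vhat i
      = α i * V i + β i * ∑ j ∈ (M i).erase i, V j / (N j : ℝ))
    (hVhat_ne : ∀ i, Vhat i ≠ 0)
    (Qhat : ι → ℝ)
    (hQhat : ∀ i, Qhat i
      = (α i * V i * Uhat i
          + β i * ∑ j ∈ (M i).erase i, (V j / (N j : ℝ)) * Uhat j) / Vhat i)
    (Unew : ι → ℝ)
    (hUnew : ∀ i, Unew i
      = α i * Qhat i + (1 / (N i : ℝ)) * ∑ j ∈ (W i).erase i, β j * Qhat j) :
    ∑ i, V i * Unew i = ∑ i, V i * Uhat i := by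
  -- key swap lemma
  have swap : ∀ f : ι → ι → ℝ,
      (∑ i, ∑ j ∈ (W i).erase i, f i j) = ∑ j, ∑ i ∈ (M j).erase j, f i j := by
    intro f
    have h1 : ∀ i, (∑ j ∈ (W i).erase i, f i j)
        = ∑ j, if i ∈ (M j).erase j then f i j else 0 := by
      intro i
      rw [← Finset.sum_filter]
      congr 1
      ext j
      simp only [hW, Finset.mem_erase, Finset.mem_filter, Finset.mem_univ, true_and,
        and_true]
      constructor
      · rintro ⟨h1, h2⟩; exact ⟨Ne.symm h1, h2⟩
      · rintro ⟨h1, h2⟩; exact ⟨Ne.symm h1, h2⟩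
    simp_rw [h1]
    rw [Finset.sum_comm]
    congr 1
    ext j
    rw [Finset.sum_ite_mem, Finset.univ_inter]
  have hQV : ∀ i, Qhat i * Vhat i
      = α i * V i * Uhat i + β i * ∑ j ∈ (M i).erase i, (V j / (N j : ℝ)) * Uhat j := by
    intro i
    rw [hQhat i, div_mul_cancel₀ _ (hVhat_ne i)]
  calc ∑ i, V i * Unew i
      = ∑ i, α i * V i * Qhat i
        + ∑ i, ∑ j ∈ (W i).erase i, (V i / (N i : ℝ)) * (β j * Qhat j) := by
        simp_rw [hUnew, mul_add, Finset.sum_add_distrib, Finset.mul_sum]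
        congr 1
        · apply Finset.sum_congr rfl; intro i _; ring
        · apply Finset.sum_congr rfl; intro i _
          apply Finset.sum_congr rfl; intro j _; ring
    _ = ∑ i, α i * V i * Qhat i
        + ∑ j, ∑ i ∈ (M j).erase j, (V i / (N i : ℝ)) * (β j * Qhat j) := by
        rw [swap]
    _ = ∑ j, Qhat j * Vhat j := by
        rw [← Finset.sum_add_distrib]
        apply Finset.sum_congr rfl; intro j _
        rw [hVhat j, ← Finset.sum_mul]
        ring
    _ = ∑ j, α j * V j * Uhat j
        + ∑ i, (∑ j ∈ (W i).erase i, β j) * ((V i / (N i : ℝ)) * Uhat i) := by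
        simp_rw [hQV, Finset.sum_add_distrib]
        congr 1
        calc ∑ x, β x * ∑ j ∈ (M x).erase x, (V j / (N j : ℝ)) * Uhat j
            = ∑ j, ∑ i ∈ (M j).erase j, β j * ((V i / (N i : ℝ)) * Uhat i) := by
              apply Finset.sum_congr rfl; intro j _; rw [Finset.mul_sum]
          _ = ∑ i, ∑ j ∈ (W i).erase i, β j * ((V i / (N i : ℝ)) * Uhat i) :=
              (swap (fun i j => β j * ((V i / (N i : ℝ)) * Uhat i))).symm
          _ = ∑ i, (∑ j ∈ (W i).erase i, β j) * ((V i / (N i : ℝ)) * Uhat i) := by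
              apply Finset.sum_congr rfl; intro i _; rw [Finset.sum_mul]
    _ = ∑ i, V i * Uhat i := by
        rw [← Finset.sum_add_distrib]
        apply Finset.sum_congr rfl; intro i _
        have hs : (1 / (N i : ℝ)) * ∑ j ∈ (W i).erase i, β j = 1 - α i := by
          rw [hα i]; ring
        have hNne : (N i : ℝ) ≠ 0 := by
          have : 0 < (W i).card := Finset.card_pos.mpr ⟨i, by simp [hW, hMself i]⟩
          rw [hN i]; positivity
        have : (∑ j ∈ (W i).erase i, β j) = (N i : ℝ) * (1 - α i) := by
          field_simp at hs ⊢
          linarith [hs]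
        rw [this]
        field_simp
        ring
end
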